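/- There exist constants C > 0 and α ∈ (0,1) such that for any probability measure μ on ℝⁿ with finite second moment and any ℓ > 0, the discrete entropy of μ on the cubic grid of scale ℓ satisfies Σ_{j∈ℤⁿ} μ(Q_j^ℓ) log(μ(Q_j^ℓ)) ≥ −C (M(μ) + nℓ² + 1)^α + n log(ℓ). -/

import Mathlib

open MeasureTheory ENNReal Filter Topology
noncomputable section

abbrev En (n : ℕ) : Type := EuclideanSpace ℝ (Fin n)

def IsCoupling {n : ℕ} (μ ν : Measure (En n)) (γ : Measure (En n × En n)) : Prop :=
  γ.map Prod.fst = μ ∧ γ.map Prod.snd = ν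

def tCost {n : ℕ} (γ : Measure (En n × En n)) : ℝ≥0∞ :=
  ∫⁻ p, (‖p.1 - p.2‖₊ : ℝ≥0∞) ^ 2 ∂γ

def W2sq {n : ℕ} (μ ν : Measure (En n)) : ℝ≥0∞ :=
  ⨅ (γ : Measure (En n × En n)) (_ : IsCoupling μ ν γ), tCost γ

def M2 {n : ℕ} (μ : Measure (En n)) : ℝ≥0∞ := ∫⁻ x, (‖x‖₊ : ℝ≥0∞) ^ 2 ∂μ

def dens {X : Type*} [MeasureSpace X] (μ : Measure X) (x : X) : ℝ :=
  (μ.rnDeriv volume x).toReal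

def entIntegrand {X : Type*} [MeasureSpace X] (μ : Measure X) (x : X) : ℝ :=
  dens μ x * Real.log (dens μ x)

def Hneg {X : Type*} [MeasureSpace X] (μ : Measure X) : ℝ≥0∞ :=
  ∫⁻ x, ENNReal.ofReal (-(entIntegrand μ x))

def Hpos {X : Type*} [MeasureSpace X] (μ : Measure X) : ℝ≥0∞ :=
  ∫⁻ x, ENNReal.ofReal (entIntegrand μ x)

open scoped Classical in
def entE {X : Type*} [MeasureSpace X] (μ : Measure X) : EReal :=
  if μ ≪ (volume : Measure X) then
    (if Hpos μ = ∞ then (⊤ : EReal) else ((Hpos μ).toReal : EReal) - ((Hneg μ : ℝ≥0∞) : EReal))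
  else ⊤

def W2epsE {n : ℕ} (ε : ℝ) (μ ν : Measure (En n)) : EReal :=
  ⨅ (γ : Measure (En n × En n)) (_ : IsCoupling μ ν γ),
    ((tCost γ : ℝ≥0∞) : EReal) + (ε : EReal) * entE γ

def cube {n : ℕ} (j : Fin n → ℤ) (ℓ : ℝ) : Set (En n) :=
  {x | ∀ i, (j i : ℝ) * ℓ ≤ x i ∧ x i < ((j i : ℝ) + 1) * ℓ}

def cellNormalize {n : ℕ} (μ : Measure (En n)) (S : Set (En n)) : Measure (En n) :=
  (μ S)⁻¹ • μ.restrict S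

def blockApprox {n : ℕ} (μ ν : Measure (En n)) (γ : Measure (En n × En n)) (ℓ : ℝ) :
    Measure (En n × En n) :=
  Measure.sum (fun jk : (Fin n → ℤ) × (Fin n → ℤ) =>
    γ (cube jk.1 ℓ ×ˢ cube jk.2 ℓ) •
      ((cellNormalize μ (cube jk.1 ℓ)).prod (cellNormalize ν (cube jk.2 ℓ))))

/-!
Compare the cell masses `p_j = μ(Q_j^ℓ)` with the two-sided geometric weights
`q_j = ((1 - r) / 2)ⁿ r^|j|₁`, `r = e^{-t}`, whose total mass is at most `1`.
Gibbs' inequality gives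
`Σ p_j log p_j ≥ Σ p_j log q_j = n log ((1 - e^{-t}) / 2) - t Σ p_j |j|₁`,
and the discrete first moment `ℓ Σ p_j |j|₁` is at most `(M(μ) + n) / 2 + nℓ`, since
`|j_i| ℓ ≤ |x_i| + ℓ` on `Q_j^ℓ`. With `log (1 - e^{-t}) ≥ log t - t`, the choice `t = ℓ / √S`,
`S = M(μ) + nℓ² + 1`, yields the bound with `C = 5 (n + 1)` and `α = 1 / 2`.
-/

open Function

section Cubes

variable {n : ℕ} {ℓ : ℝ}

lemma mem_cube_iff (hℓ : 0 < ℓ) {j : Fin n → ℤ} {x : En n} :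
    x ∈ cube j ℓ ↔ ∀ i, ⌊x i / ℓ⌋ = j i := by
  refine forall_congr' fun i => ?_
  rw [Int.floor_eq_iff, le_div_iff₀ hℓ, div_lt_iff₀ hℓ]

lemma measurableSet_cube (j : Fin n → ℤ) (ℓ : ℝ) : MeasurableSet (cube j ℓ) := by
  have : cube j ℓ = ⋂ i, (fun x : En n => x i) ⁻¹' Set.Ico ((j i : ℝ) * ℓ) ((j i + 1) * ℓ) := by
    ext x; simp [cube]
  rw [this]
  exact .iInter fun i => (EuclideanSpace.proj (𝕜 := ℝ) i).continuous.measurable measurableSet_Ico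

lemma pairwise_disjoint_cube (hℓ : 0 < ℓ) :
    Pairwise (Disjoint on fun j : Fin n → ℤ => cube j ℓ) := by
  refine fun j k hjk => Set.disjoint_left.2 fun x hj hk => hjk (funext fun i => ?_)
  rw [← (mem_cube_iff hℓ).1 hj i, (mem_cube_iff hℓ).1 hk i]

lemma iUnion_cube (hℓ : 0 < ℓ) : ⋃ j : Fin n → ℤ, cube j ℓ = Set.univ :=
  Set.eq_univ_of_forall fun x =>
    Set.mem_iUnion.2 ⟨fun i => ⌊x i / ℓ⌋, (mem_cube_iff hℓ).2 fun _ => rfl⟩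

lemma tsum_measure_cube (μ : Measure (En n)) [IsProbabilityMeasure μ] (hℓ : 0 < ℓ) :
    ∑' j : Fin n → ℤ, μ (cube j ℓ) = 1 := by
  rw [← measure_iUnion (pairwise_disjoint_cube hℓ) (measurableSet_cube · ℓ), iUnion_cube hℓ,
    measure_univ]

lemma abs_mul_le_of_mem_cube (hℓ : 0 < ℓ) {j : Fin n → ℤ} {x : En n} (hx : x ∈ cube j ℓ)
    (i : Fin n) : |(j i : ℝ)| * ℓ ≤ |x i| + ℓ := by
  obtain ⟨hlo, hhi⟩ := hx i
  rw [← abs_of_pos hℓ, ← abs_mul, abs_of_pos hℓ]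
  exact abs_le.2 ⟨by linarith [neg_abs_le (x i)], by linarith [le_abs_self (x i)]⟩

lemma mul_sum_natAbs_le_of_mem_cube (hℓ : 0 < ℓ) {j : Fin n → ℤ} {x : En n}
    (hx : x ∈ cube j ℓ) : ℓ * ∑ i, ((j i).natAbs : ℝ) ≤ (‖x‖ ^ 2 + n) / 2 + n * ℓ := by
  have hsq : ∀ i, |x i| ≤ (x i ^ 2 + 1) / 2 := fun i => by
    nlinarith [sq_abs (x i), sq_nonneg (|x i| - 1)]
  calc ℓ * ∑ i, ((j i).natAbs : ℝ) = ∑ i, |(j i : ℝ)| * ℓ := by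
        simp only [Nat.cast_natAbs, Int.cast_abs, Finset.mul_sum, mul_comm]
    _ ≤ ∑ i, ((x i ^ 2 + 1) / 2 + ℓ) :=
        Finset.sum_le_sum fun i _ => (abs_mul_le_of_mem_cube hℓ hx i).trans (by linarith [hsq i])
    _ = (‖x‖ ^ 2 + n) / 2 + n * ℓ := by
        simp only [EuclideanSpace.norm_sq_eq, Real.norm_eq_abs, sq_abs, Finset.sum_add_distrib,
          ← Finset.sum_div, Finset.sum_const, Finset.card_univ, Fintype.card_fin, nsmul_eq_mul,
          mul_one]

end Cubes

lemma tsum_measure_mul_le_lintegral {X ι : Type*} [MeasurableSpace X] [Countable ι]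
    (μ : Measure X) {s : ι → Set X} (hs : ∀ i, MeasurableSet (s i)) (hd : Pairwise (Disjoint on s))
    {a : ι → ℝ≥0∞} {G : X → ℝ≥0∞} (h : ∀ i, ∀ x ∈ s i, a i ≤ G x) :
    ∑' i, μ (s i) * a i ≤ ∫⁻ x, G x ∂μ :=
  calc ∑' i, μ (s i) * a i = ∑' i, ∫⁻ _ in s i, a i ∂μ := by simp [mul_comm]
    _ ≤ ∑' i, ∫⁻ x in s i, G x ∂μ := ENNReal.tsum_le_tsum fun i => setLIntegral_mono' (hs i) (h i)
    _ = ∫⁻ x in ⋃ i, s i, G x ∂μ := (lintegral_iUnion hs hd G).symm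
    _ ≤ ∫⁻ x, G x ∂μ := setLIntegral_le_lintegral _ _

lemma tsum_measure_cube_mul_ofReal_le {n : ℕ} (μ : Measure (En n)) [IsProbabilityMeasure μ]
    {ℓ : ℝ} (hℓ : 0 < ℓ) :
    ∑' j : Fin n → ℤ, μ (cube j ℓ) * ENNReal.ofReal (ℓ * ∑ i, ((j i).natAbs : ℝ))
      ≤ 2⁻¹ * M2 μ + ENNReal.ofReal (n / 2 + n * ℓ) :=
  calc _ ≤ ∫⁻ x, 2⁻¹ * (‖x‖₊ : ℝ≥0∞) ^ 2 + ENNReal.ofReal (n / 2 + n * ℓ) ∂μ := by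
        refine tsum_measure_mul_le_lintegral μ (measurableSet_cube · ℓ)
          (pairwise_disjoint_cube hℓ) fun j x hx => ?_
        have hG : 2⁻¹ * (‖x‖₊ : ℝ≥0∞) ^ 2 + ENNReal.ofReal (n / 2 + n * ℓ)
            = ENNReal.ofReal ((‖x‖ ^ 2 + n) / 2 + n * ℓ) := by
          rw [show (‖x‖ ^ 2 + n) / 2 + n * ℓ = 2⁻¹ * ‖x‖ ^ 2 + (n / 2 + n * ℓ) by ring,
            ENNReal.ofReal_add (p := 2⁻¹ * ‖x‖ ^ 2) (by positivity) (by positivity),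
            ENNReal.ofReal_mul (p := 2⁻¹) (by norm_num), ENNReal.ofReal_inv_of_pos two_pos,
            ENNReal.ofReal_ofNat, ENNReal.ofReal_pow (norm_nonneg x), ofReal_norm]
          rfl
        rw [hG]
        exact ENNReal.ofReal_le_ofReal (mul_sum_natAbs_le_of_mem_cube hℓ hx)
    _ = 2⁻¹ * M2 μ + ENNReal.ofReal (n / 2 + n * ℓ) := by
        rw [lintegral_add_right _ measurable_const, lintegral_const_mul _ (by fun_prop),
          lintegral_const, measure_univ, mul_one]
        rfl

lemma summable_and_tsum_measure_cube_mul_sum_natAbs_le {n : ℕ} (μ : Measure (En n))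
    [IsProbabilityMeasure μ] (hM : M2 μ ≠ ∞) {ℓ : ℝ} (hℓ : 0 < ℓ) :
    Summable (fun j : Fin n → ℤ => (μ (cube j ℓ)).toReal * ∑ i, ((j i).natAbs : ℝ)) ∧
      ℓ * ∑' j : Fin n → ℤ, (μ (cube j ℓ)).toReal * ∑ i, ((j i).natAbs : ℝ)
        ≤ ((M2 μ).toReal + n) / 2 + n * ℓ := by
  have hle := tsum_measure_cube_mul_ofReal_le μ hℓ
  have hB : 2⁻¹ * M2 μ + ENNReal.ofReal (n / 2 + n * ℓ) ≠ ∞ := by finiteness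
  have htoReal (j : Fin n → ℤ) :
      (μ (cube j ℓ) * ENNReal.ofReal (ℓ * ∑ i, ((j i).natAbs : ℝ))).toReal
        = ℓ * ((μ (cube j ℓ)).toReal * ∑ i, ((j i).natAbs : ℝ)) := by
    rw [ENNReal.toReal_mul, ENNReal.toReal_ofReal (by positivity)]; ring
  have hsummable := (ENNReal.summable_toReal (ne_top_of_le_ne_top hB hle)).congr htoReal
  refine ⟨(hsummable.mul_left ℓ⁻¹).congr fun j => by field_simp, ?_⟩
  calc ℓ * ∑' j : Fin n → ℤ, (μ (cube j ℓ)).toReal * ∑ i, ((j i).natAbs : ℝ)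
      = (∑' j : Fin n → ℤ,
          μ (cube j ℓ) * ENNReal.ofReal (ℓ * ∑ i, ((j i).natAbs : ℝ))).toReal := by
        rw [ENNReal.tsum_toReal_eq (fun j => by finiteness), ← tsum_mul_left]
        exact tsum_congr fun j => (htoReal j).symm
    _ ≤ (2⁻¹ * M2 μ + ENNReal.ofReal (n / 2 + n * ℓ)).toReal := ENNReal.toReal_mono hB hle
    _ = ((M2 μ).toReal + n) / 2 + n * ℓ := by
        rw [ENNReal.toReal_add (by finiteness) ENNReal.ofReal_ne_top, ENNReal.toReal_mul,
          ENNReal.toReal_ofReal (by positivity)]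
        simp only [ENNReal.toReal_inv, ENNReal.toReal_ofNat]
        ring

lemma mul_log_add_sub_le_mul_log {p q : ℝ} (hp : 0 ≤ p) (hq : 0 < q) :
    p * Real.log q + (p - q) ≤ p * Real.log p := by
  rcases hp.eq_or_lt with rfl | hp
  · simpa using hq.le
  · have hlog : Real.log (q / p) ≤ q / p - 1 := Real.log_le_sub_one_of_pos (by positivity)
    rw [Real.log_div hq.ne' hp.ne'] at hlog
    have := mul_le_mul_of_nonneg_left hlog hp.le
    have hq' : p * (q / p - 1) = q - p := by field_simp
    linarith

lemma summable_mul_log_and_tsum_mul_log_ge {ι : Type*} {p q : ι → ℝ} (hp0 : ∀ i, 0 ≤ p i)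
    (hp1 : ∀ i, p i ≤ 1) (hq : ∀ i, 0 < q i) (hps : Summable p) (hqs : Summable q)
    (hpq : Summable fun i => p i * Real.log (q i)) :
    Summable (fun i => p i * Real.log (p i)) ∧
      ∑' i, p i * Real.log (q i) + (∑' i, p i - ∑' i, q i) ≤ ∑' i, p i * Real.log (p i) := by
  have hle i := mul_log_add_sub_le_mul_log (hp0 i) (hq i)
  have hg := hpq.add (hps.sub hqs)
  have hs : Summable fun i => p i * Real.log (p i) := by
    refine summable_neg_iff.1 (hg.neg.of_nonneg_of_le (fun i => ?_) fun i => neg_le_neg (hle i))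
    exact neg_nonneg.2 (mul_nonpos_of_nonneg_of_nonpos (hp0 i) (Real.log_nonpos (hp0 i) (hp1 i)))
  refine ⟨hs, ?_⟩
  rw [← hps.tsum_sub hqs, ← hpq.tsum_add (hps.sub hqs)]
  exact hg.tsum_le_tsum hle hs

lemma ENNReal.tsum_fin_pi_prod {α : Type*} (f : α → ℝ≥0∞) (n : ℕ) :
    ∑' j : Fin n → α, ∏ i, f (j i) = (∑' a, f a) ^ n := by
  induction n with
  | zero => simp
  | succ n ih =>
    rw [← (Fin.consEquiv fun _ => α).tsum_eq]
    simp [Fin.prod_univ_succ, ENNReal.tsum_prod', ENNReal.tsum_mul_left, ENNReal.tsum_mul_right,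
      ih, pow_succ']

lemma ENNReal.tsum_int_pow_natAbs_le {ρ : ℝ≥0∞} (hρ : ρ ≤ 1) :
    ∑' k : ℤ, ρ ^ k.natAbs ≤ 2 * (1 - ρ)⁻¹ := by
  rw [tsum_of_nat_of_neg_add_one ENNReal.summable ENNReal.summable, two_mul]
  have hneg (m : ℕ) : (-((m : ℤ) + 1)).natAbs = m + 1 := by omega
  simp only [Int.natAbs_natCast, hneg, ENNReal.tsum_geometric, ENNReal.tsum_geometric_add_one]
  gcongr
  exact mul_le_of_le_one_left' hρ

/-- The exact normaliser would be `((1 - r) / (1 + r)) ^ n`; the smaller `((1 - r) / 2) ^ n`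
only makes the total mass at most `1`, which is all Gibbs' inequality needs. -/
def laplaceWeight (n : ℕ) (r : ℝ) (j : Fin n → ℤ) : ℝ :=
  ((1 - r) / 2) ^ n * r ^ ∑ i, (j i).natAbs

lemma summable_laplaceWeight_and_tsum_le_one {n : ℕ} {r : ℝ} (hr0 : 0 ≤ r) (hr1 : r < 1) :
    Summable (laplaceWeight n r) ∧ ∑' j, laplaceWeight n r j ≤ 1 := by
  have hc : 0 ≤ (1 - r) / 2 := by linarith
  have hofReal (j : Fin n → ℤ) : ENNReal.ofReal (laplaceWeight n r j)
      = ENNReal.ofReal ((1 - r) / 2) ^ n * ∏ i, ENNReal.ofReal r ^ (j i).natAbs := by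
    rw [laplaceWeight, Finset.prod_pow_eq_pow_sum, ENNReal.ofReal_mul (by positivity),
      ENNReal.ofReal_pow hc, ENNReal.ofReal_pow hr0]
  have hle : ∑' j, ENNReal.ofReal (laplaceWeight n r j) ≤ 1 := by
    have h2 : ENNReal.ofReal ((1 - r) / 2) * 2 = 1 - ENNReal.ofReal r := by
      rw [← ENNReal.ofReal_ofNat, ← ENNReal.ofReal_mul hc, div_mul_cancel₀ _ two_ne_zero,
        ENNReal.ofReal_sub _ hr0, ENNReal.ofReal_one]
    have hne : 1 - ENNReal.ofReal r ≠ 0 := (tsub_pos_of_lt (ENNReal.ofReal_lt_one.2 hr1)).ne'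
    calc ∑' j, ENNReal.ofReal (laplaceWeight n r j)
        = (ENNReal.ofReal ((1 - r) / 2) * ∑' k : ℤ, ENNReal.ofReal r ^ k.natAbs) ^ n := by
          simp only [hofReal, ENNReal.tsum_mul_left, mul_pow]
          rw [ENNReal.tsum_fin_pi_prod fun k : ℤ => ENNReal.ofReal r ^ k.natAbs]
      _ ≤ (ENNReal.ofReal ((1 - r) / 2) * (2 * (1 - ENNReal.ofReal r)⁻¹)) ^ n := by
          gcongr
          exact ENNReal.tsum_int_pow_natAbs_le (ENNReal.ofReal_le_one.2 hr1.le)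
      _ = 1 := by rw [← mul_assoc, h2, ENNReal.mul_inv_cancel hne (by finiteness), one_pow]
  have hnonneg (j : Fin n → ℤ) : 0 ≤ laplaceWeight n r j := by unfold laplaceWeight; positivity
  have hsum : Summable (laplaceWeight n r) :=
    (ENNReal.summable_toReal (ne_top_of_le_ne_top ENNReal.one_ne_top hle)).congr
      fun j => ENNReal.toReal_ofReal (hnonneg j)
  refine ⟨hsum, ?_⟩
  rw [← ENNReal.ofReal_le_one, ENNReal.ofReal_tsum_of_nonneg hnonneg hsum]
  exact hle

lemma Real.log_sub_le_log_one_sub_exp_neg {t : ℝ} (ht : 0 < t) :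
    Real.log t - t ≤ Real.log (1 - Real.exp (-t)) := by
  have hle : t * Real.exp (-t) ≤ 1 - Real.exp (-t) := by
    have h := mul_le_mul_of_nonneg_right (Real.add_one_le_exp t) (Real.exp_pos (-t)).le
    rw [← Real.exp_add, add_neg_cancel, Real.exp_zero, add_mul, one_mul] at h
    linarith
  calc Real.log t - t = Real.log (t * Real.exp (-t)) := by
        rw [Real.log_mul ht.ne' (Real.exp_pos _).ne', Real.log_exp]; ring
    _ ≤ Real.log (1 - Real.exp (-t)) := Real.log_le_log (by positivity) hle

lemma tsum_mul_log_measure_cube_ge {n : ℕ} (μ : Measure (En n)) [IsProbabilityMeasure μ] {ℓ t : ℝ}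
    (hℓ : 0 < ℓ) (ht : 0 < t)
    (hT : Summable fun j : Fin n → ℤ => (μ (cube j ℓ)).toReal * ∑ i, ((j i).natAbs : ℝ)) :
    Summable (fun j : Fin n → ℤ => (μ (cube j ℓ)).toReal * Real.log ((μ (cube j ℓ)).toReal)) ∧
      n * Real.log ((1 - Real.exp (-t)) / 2)
          - t * ∑' j : Fin n → ℤ, (μ (cube j ℓ)).toReal * ∑ i, ((j i).natAbs : ℝ)
        ≤ ∑' j : Fin n → ℤ, (μ (cube j ℓ)).toReal * Real.log ((μ (cube j ℓ)).toReal) := by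
  set p : (Fin n → ℤ) → ℝ := fun j => (μ (cube j ℓ)).toReal
  set q := laplaceWeight n (Real.exp (-t))
  have hr1 : Real.exp (-t) < 1 := Real.exp_lt_one_iff.2 (neg_neg_of_pos ht)
  have hc : 0 < (1 - Real.exp (-t)) / 2 := by linarith
  obtain ⟨hqs, hq1⟩ := summable_laplaceWeight_and_tsum_le_one (n := n) (Real.exp_pos (-t)).le hr1
  have hp1 : ∑' j, μ (cube j ℓ) = 1 := tsum_measure_cube μ hℓ
  have hps : Summable p := ENNReal.summable_toReal (by simp [hp1])
  have hptsum : ∑' j, p j = 1 := by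
    rw [← ENNReal.tsum_toReal_eq (fun j => measure_ne_top μ _), hp1, ENNReal.toReal_one]
  have hlogq (j : Fin n → ℤ) :
      p j * Real.log (q j)
        = n * Real.log ((1 - Real.exp (-t)) / 2) * p j - t * (p j * ∑ i, ((j i).natAbs : ℝ)) := by
    simp only [q, laplaceWeight, Real.log_pow, Real.log_exp,
      Real.log_mul (pow_ne_zero _ hc.ne') (pow_ne_zero _ (Real.exp_pos _).ne')]
    push_cast
    ring
  have hpq : Summable fun j => p j * Real.log (q j) :=
    ((hps.mul_left _).sub (hT.mul_left t)).congr fun j => (hlogq j).symm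
  obtain ⟨hsum, hgibbs⟩ := summable_mul_log_and_tsum_mul_log_ge (fun j => ENNReal.toReal_nonneg)
    (fun j => measureReal_le_one) (fun j => by unfold laplaceWeight; positivity) hps hqs hpq
  refine ⟨hsum, ?_⟩
  rw [tsum_congr hlogq, (hps.mul_left _).tsum_sub (hT.mul_left t), tsum_mul_left, tsum_mul_left,
    hptsum] at hgibbs
  linarith

lemma neg_mul_add_mul_log_le_of_sq_eq {n : ℕ} {M ℓ s : ℝ} (hM : 0 ≤ M) (hℓ : 0 < ℓ)
    (hs : s ^ 2 = M + n * ℓ ^ 2 + 1) (hs1 : 1 ≤ s) :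
    -(5 * (n + 1)) * s + n * Real.log ℓ
      ≤ n * Real.log ((1 - Real.exp (-(ℓ / s))) / 2) - ((M + n) / 2 + n * ℓ) / s := by
  have hs0 : 0 < s := by linarith
  have hlogc :
      Real.log ℓ - Real.log s - ℓ / s - Real.log 2 ≤ Real.log ((1 - Real.exp (-(ℓ / s))) / 2) := by
    have h := Real.log_sub_le_log_one_sub_exp_neg (div_pos hℓ hs0)
    have hpos : 0 < 1 - Real.exp (-(ℓ / s)) := by
      linarith [Real.exp_lt_one_iff.2 (neg_neg_of_pos (div_pos hℓ hs0))]
    rw [Real.log_div hpos.ne' two_ne_zero]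
    rw [Real.log_div hℓ.ne' hs0.ne'] at h
    linarith
  have hlog_s : Real.log s ≤ s := by linarith [Real.log_le_sub_one_of_pos hs0]
  have hlog2 : Real.log 2 ≤ 1 := by linarith [Real.log_le_sub_one_of_pos two_pos]
  have hn : (0 : ℝ) ≤ n := n.cast_nonneg
  have hbound : n * s * Real.log s + n * ℓ + n * s * Real.log 2 + ((M + n) / 2 + n * ℓ)
      ≤ 5 * (n + 1) * s ^ 2 := by
    have h1 : n * s * Real.log s ≤ n * s ^ 2 := by
      nlinarith [mul_le_mul_of_nonneg_left hlog_s (mul_nonneg hn hs0.le : (0:ℝ) ≤ n * s)]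
    have h2 : n * s * Real.log 2 ≤ n * s ^ 2 := by
      nlinarith [mul_le_mul_of_nonneg_left hlog2 (mul_nonneg hn hs0.le : (0:ℝ) ≤ n * s),
        mul_nonneg (mul_nonneg hn hs0.le) (sub_nonneg.2 hs1)]
    have h3 : 2 * (n * ℓ) ≤ s ^ 2 + n := by nlinarith [mul_nonneg hn (sq_nonneg (ℓ - 1))]
    have h4 : M ≤ s ^ 2 := by nlinarith [mul_nonneg hn (sq_nonneg ℓ)]
    have h5 : (n : ℝ) ≤ n * s ^ 2 := by nlinarith [mul_nonneg hn (sub_nonneg.2 hs1)]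
    nlinarith
  have hkey :
      n * (Real.log s + ℓ / s + Real.log 2) + ((M + n) / 2 + n * ℓ) / s ≤ 5 * (n + 1) * s := by
    rw [show n * (Real.log s + ℓ / s + Real.log 2) + ((M + n) / 2 + n * ℓ) / s
        = (n * s * Real.log s + n * ℓ + n * s * Real.log 2 + ((M + n) / 2 + n * ℓ)) / s by
      field_simp, div_le_iff₀ hs0]
    linarith
  nlinarith [mul_le_mul_of_nonneg_left hlogc hn]

/-- there are `C > 0`, `α ∈ (0,1)` such that for any probability measure on
`ℝⁿ` with finite second moment and any grid scale `ℓ > 0`, the discrete grid entropy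
satisfies `Σ_j μ(Q_j^ℓ) log μ(Q_j^ℓ) ≥ −C (M(μ) + nℓ² + 1)^α + n log ℓ`. -/
theorem stmt_10 {n : ℕ} :
    ∃ C : ℝ, 0 < C ∧ ∃ α : ℝ, α ∈ Set.Ioo (0:ℝ) 1 ∧
      ∀ (μ : Measure (En n)) [IsProbabilityMeasure μ], M2 μ ≠ ∞ → ∀ ℓ : ℝ, 0 < ℓ →
        Summable (fun j : Fin n → ℤ =>
          (μ (cube j ℓ)).toReal * Real.log ((μ (cube j ℓ)).toReal)) ∧
        -C * (((M2 μ).toReal + n * ℓ ^ 2 + 1) ^ α) + n * Real.log ℓ ≤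
          ∑' j : Fin n → ℤ, (μ (cube j ℓ)).toReal * Real.log ((μ (cube j ℓ)).toReal) := by
  refine ⟨5 * (n + 1), by positivity, 1 / 2, ⟨by norm_num, by norm_num⟩, fun μ _ hM ℓ hℓ => ?_⟩
  set S := (M2 μ).toReal + n * ℓ ^ 2 + 1
  have hS : 1 ≤ S := by simp only [S]; nlinarith [ENNReal.toReal_nonneg (a := M2 μ)]
  have hs1 : 1 ≤ √S := Real.one_le_sqrt.2 hS
  obtain ⟨hTs, hT⟩ := summable_and_tsum_measure_cube_mul_sum_natAbs_le μ hM hℓ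
  obtain ⟨hsum, hent⟩ := tsum_mul_log_measure_cube_ge μ hℓ (div_pos hℓ (by positivity : 0 < √S)) hTs
  refine ⟨hsum, ?_⟩
  rw [← Real.sqrt_eq_rpow]
  calc -(5 * (n + 1)) * √S + n * Real.log ℓ
      ≤ n * Real.log ((1 - Real.exp (-(ℓ / √S))) / 2)
          - (((M2 μ).toReal + n) / 2 + n * ℓ) / √S :=
        neg_mul_add_mul_log_le_of_sq_eq ENNReal.toReal_nonneg hℓ (Real.sq_sqrt (by positivity))
          hs1
    _ ≤ n * Real.log ((1 - Real.exp (-(ℓ / √S))) / 2) - ℓ / √S *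
          ∑' j : Fin n → ℤ, (μ (cube j ℓ)).toReal * ∑ i, ((j i).natAbs : ℝ) := by
        rw [div_mul_eq_mul_div]; gcongr
    _ ≤ _ := hent
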